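/- arXiv:1609.03406 — 3 statements merged into one kernel-verified Lean document; each statement's English description precedes it below -/
import Mathlib

section
/- Let Ω ⊂ ℝ^N be bounded open with C¹ boundary and A ∈ (L^∞(Ω))^N such that the 'compatibility matrix' with entries ξ_{jk} = ∂_{x_j}a_k − ∂_{x_k}a_j is not identically zero (i.e. curl A ≠ 0). Then there exists a constant C(Ω) > 0 such that for all ω ∈ H¹_0(Ω), ‖ω‖_{L²} ≤ C(Ω)‖(i∇+A)ω‖_{(L²)^N}. -/
/-! The diamagnetic inequality `|∇|ω|| ≤ |(i∇ + A)ω|` holds pointwise, because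
`Re (conj ω · i aⱼ ω) = 0`. Two distinct indices `j ≠ k` in the curl give `N ≥ 2`, so the
Gagliardo–Nirenberg–Sobolev inequality followed by Hölder's inequality on the bounded set `Ω`
yields the Poincaré inequality `‖u‖_{L²} ≤ C ‖∇u‖_{L²}` for real `C¹` functions `u` supported
in `Ω`. Applied to `u = |ω|` this is the claim; as `|ω|` need not be `C¹`, it is applied to
`√(|ω|² + ε²) - ε` instead, and `ε → 0` by Fatou's lemma. -/

open MeasureTheory

/-- The `j`-th component of the magnetic gradient `(i∇ + A)ω`. -/
noncomputable def magGrad (N : ℕ) (A : Fin N → (Fin N → ℝ) → ℝ)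
    (ω : (Fin N → ℝ) → ℂ) (j : Fin N) (x : Fin N → ℝ) : ℂ :=
  Complex.I * fderiv ℝ ω x (Pi.single j 1) + (A j x : ℂ) * ω x

open Bornology Module Filter Topology Function
open scoped NNReal ENNReal RealInnerProductSpace

lemma MemLp.toReal_eLpNorm_two {α E : Type*} [MeasurableSpace α] {μ : Measure α}
    [NormedAddCommGroup E] {f : α → E} (hf : MemLp f 2 μ) :
    (eLpNorm f 2 μ).toReal = √(∫ x, ‖f x‖ ^ 2 ∂μ) := by
  rw [hf.eLpNorm_eq_integral_rpow_norm two_ne_zero ENNReal.ofNat_ne_top,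
    ENNReal.toReal_ofReal (by positivity), Real.sqrt_eq_rpow]
  simp

section Poincare

variable {E F : Type*} [NormedAddCommGroup E] [NormedSpace ℝ E] [FiniteDimensional ℝ E]
  [MeasurableSpace E] [BorelSpace E] (μ : Measure E) [μ.IsAddHaarMeasure]
  [NormedAddCommGroup F] [NormedSpace ℝ F] [FiniteDimensional ℝ F]

/-- `1/p = 1/2 + 1/n` is the exponent for which Gagliardo–Nirenberg–Sobolev lands in `L²`. -/
theorem exists_eLpNorm_two_le_mul_eLpNorm_fderiv (hE : 2 ≤ finrank ℝ E) {s : Set E}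
    (hs : IsBounded s) :
    ∃ C : ℝ≥0, ∀ u : E → F, ContDiff ℝ 1 u → tsupport u ⊆ s →
      eLpNorm u 2 μ ≤ C * eLpNorm (fderiv ℝ u) 2 μ := by
  set n := finrank ℝ E
  have hn : (2 : ℝ) ≤ n := mod_cast hE
  set p : ℝ≥0 := (2⁻¹ + (n : ℝ≥0)⁻¹)⁻¹ with hp
  have hp_inv : (p : ℝ)⁻¹ = 2⁻¹ + (n : ℝ)⁻¹ := by simp [hp]
  have hp_pos : (0 : ℝ) < p := inv_pos.mp (by rw [hp_inv]; positivity)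
  have hp_one : 1 ≤ p := by
    rw [← NNReal.coe_le_coe, NNReal.coe_one, ← inv_le_inv₀ hp_pos one_pos, hp_inv, inv_one]
    have : (n : ℝ)⁻¹ ≤ 2⁻¹ := inv_anti₀ two_pos hn
    linarith
  have hp_lt : p < n := by
    rw [← NNReal.coe_lt_coe, NNReal.coe_natCast, ← inv_lt_inv₀ (by positivity) hp_pos, hp_inv]
    linarith
  have hp_two : (p : ℝ≥0∞) ≤ 2 := by
    have : (p : ℝ) ≤ 2 := by
      rw [← inv_le_inv₀ two_pos hp_pos, hp_inv]
      have : (0 : ℝ) ≤ (n : ℝ)⁻¹ := by positivity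
      linarith
    exact_mod_cast this
  have hpq : (p : ℝ)⁻¹ - (n : ℝ)⁻¹ ≤ ((2 : ℝ≥0) : ℝ)⁻¹ := by simp [hp_inv]
  refine ⟨eLpNormLESNormFDerivOfLeConst F μ s p 2 * (μ s).toNNReal ^ (1 / (p : ℝ) - 1 / 2),
    fun u hu hus => ?_⟩
  have hDus : (fderiv ℝ u).support ⊆ s := (support_fderiv_subset ℝ).trans hus
  have hHolder : eLpNorm (fderiv ℝ u) p μ
      ≤ eLpNorm (fderiv ℝ u) 2 μ * ((μ s).toNNReal ^ (1 / (p : ℝ) - 1 / 2) : ℝ≥0) := by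
    have hθ : 0 ≤ 1 / (p : ℝ) - 1 / 2 := by
      rw [one_div, one_div, hp_inv, add_sub_cancel_left]; positivity
    rw [ENNReal.coe_rpow_of_nonneg _ hθ, ENNReal.coe_toNNReal hs.measure_lt_top.ne]
    rw [← eLpNorm_restrict_eq_of_support_subset (f := fderiv ℝ u) (p := p) (μ := μ) hDus,
      ← eLpNorm_restrict_eq_of_support_subset (f := fderiv ℝ u) (p := 2) (μ := μ) hDus]
    simpa using eLpNorm_le_eLpNorm_mul_rpow_measure_univ (μ := μ.restrict s) hp_two
      (hu.continuous_fderiv one_ne_zero).aestronglyMeasurable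
  calc eLpNorm u (2 : ℝ≥0) μ
      ≤ eLpNormLESNormFDerivOfLeConst F μ s p 2 * eLpNorm (fderiv ℝ u) p μ :=
        eLpNorm_le_eLpNorm_fderiv_of_le μ hu (subset_tsupport u |>.trans hus) hp_one hp_lt hpq hs
    _ ≤ _ := by
      grw [hHolder]
      rw [ENNReal.coe_mul, mul_assoc, mul_comm (eLpNorm _ 2 μ)]

end Poincare

section SmoothNorm

variable {F : Type*} [NormedAddCommGroup F] {ε : ℝ}

noncomputable def smoothNorm (ε : ℝ) (z : F) : ℝ := √(‖z‖ ^ 2 + ε ^ 2) - ε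

lemma smoothNorm_zero (hε : 0 ≤ ε) : smoothNorm ε (0 : F) = 0 := by
  simp [smoothNorm, Real.sqrt_sq hε]

lemma tendsto_smoothNorm (z : F) : Tendsto (fun ε => smoothNorm ε z) (𝓝 0) (𝓝 ‖z‖) := by
  have : Continuous (fun ε : ℝ => smoothNorm ε z) := by unfold smoothNorm; fun_prop
  simpa [smoothNorm, Real.sqrt_sq (norm_nonneg z)] using this.tendsto 0

variable [InnerProductSpace ℝ F]

lemma contDiff_smoothNorm (hε : ε ≠ 0) : ContDiff ℝ ⊤ (smoothNorm ε : F → ℝ) :=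
  ((contDiff_norm_sq ℝ).add contDiff_const).sqrt (fun _ => by positivity) |>.sub contDiff_const

lemma fderiv_smoothNorm_apply (hε : ε ≠ 0) (z w : F) :
    fderiv ℝ (smoothNorm ε) z w = ⟪z, w⟫ / √(‖z‖ ^ 2 + ε ^ 2) := by
  have h : HasFDerivAt (smoothNorm ε) _ z :=
    (((hasFDerivAt_id z).norm_sq.add_const (ε ^ 2)).sqrt (by positivity)).sub_const ε
  rw [h.fderiv]
  simp
  ring

end SmoothNorm

lemma abs_real_inner_le_norm_mul_norm_I_mul_add (z w : ℂ) (a : ℝ) :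
    |⟪z, w⟫| ≤ ‖z‖ * ‖Complex.I * w + a * z‖ := by
  have : ⟪z, w⟫ = ⟪z, -Complex.I * (Complex.I * w + a * z)⟫ := by
    simp [Complex.inner]
    ring
  rw [this]
  refine (abs_real_inner_le_norm _ _).trans_eq ?_
  simp

noncomputable def magGradVec (N : ℕ) (A : Fin N → (Fin N → ℝ) → ℝ) (ω : (Fin N → ℝ) → ℂ)
    (x : Fin N → ℝ) : EuclideanSpace ℂ (Fin N) :=
  WithLp.toLp 2 fun j => magGrad N A ω j x

section Magnetic

variable {N : ℕ} {A : Fin N → (Fin N → ℝ) → ℝ} {ω : (Fin N → ℝ) → ℂ} {x : Fin N → ℝ} {ε : ℝ}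

lemma abs_fderiv_smoothNorm_comp_apply_single_le (hε : ε ≠ 0) (hω : DifferentiableAt ℝ ω x)
    (j : Fin N) :
    |fderiv ℝ (smoothNorm ε ∘ ω) x (Pi.single j 1)| ≤ ‖magGrad N A ω j x‖ := by
  rw [fderiv_comp x ((contDiff_smoothNorm hε).differentiable (by simp) _) hω,
    ContinuousLinearMap.comp_apply, fderiv_smoothNorm_apply hε, abs_div,
    abs_of_pos (Real.sqrt_pos.mpr (by positivity)), div_le_iff₀ (Real.sqrt_pos.mpr (by positivity))]
  have hnorm : ‖ω x‖ ≤ √(‖ω x‖ ^ 2 + ε ^ 2) :=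
    Real.le_sqrt_of_sq_le (le_add_of_nonneg_right (sq_nonneg ε))
  calc |⟪ω x, fderiv ℝ ω x (Pi.single j 1)⟫| ≤ ‖ω x‖ * ‖magGrad N A ω j x‖ :=
        abs_real_inner_le_norm_mul_norm_I_mul_add _ _ _
    _ ≤ ‖magGrad N A ω j x‖ * √(‖ω x‖ ^ 2 + ε ^ 2) := by
        rw [mul_comm]; gcongr

variable (N) in
lemma exists_norm_fderiv_smoothNorm_comp_le :
    ∃ C, ∀ {ε : ℝ}, ε ≠ 0 → ∀ (A : Fin N → (Fin N → ℝ) → ℝ) {ω : (Fin N → ℝ) → ℂ} {x},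
      DifferentiableAt ℝ ω x → ‖fderiv ℝ (smoothNorm ε ∘ ω) x‖ ≤ C * ‖magGradVec N A ω x‖ := by
  classical
  obtain ⟨C, -, hbasis⟩ := (Pi.basisFun ℝ (Fin N)).exists_opNorm_le (F := ℝ)
  refine ⟨C, fun hε A ω x hω => hbasis (norm_nonneg _) fun j => ?_⟩
  rw [Pi.basisFun_apply, Real.norm_eq_abs]
  exact (abs_fderiv_smoothNorm_comp_apply_single_le hε hω j).trans
    (PiLp.norm_apply_le (magGradVec N A ω x) j)

lemma magGrad_eq_zero_of_notMem_tsupport (hx : x ∉ tsupport ω) (j : Fin N) :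
    magGrad N A ω j x = 0 := by
  simp [magGrad, fderiv_of_notMem_tsupport (𝕜 := ℝ) hx, image_eq_zero_of_notMem_tsupport hx]

lemma support_magGrad_subset (j : Fin N) : support (magGrad N A ω j) ⊆ tsupport ω :=
  fun _ hx => not_not.mp fun h => hx (magGrad_eq_zero_of_notMem_tsupport h j)

lemma support_magGradVec_subset : support (magGradVec N A ω) ⊆ tsupport ω :=
  fun _ hx => not_not.mp fun h => hx <| by
    ext j; simp [magGradVec, magGrad_eq_zero_of_notMem_tsupport h j]

lemma continuous_magGrad (hω : ContDiff ℝ 1 ω) {j : Fin N}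
    (hA : ∀ x ∈ tsupport ω, ContinuousAt (A j) x) : Continuous (magGrad N A ω j) := by
  have hAω : Continuous fun x => (A j x : ℂ) * ω x := continuous_of_tsupport fun x hx =>
    (Complex.continuous_ofReal.continuousAt.comp (hA x (tsupport_mul_subset_right hx))).mul
      hω.continuous.continuousAt
  exact (continuous_const.mul ((hω.continuous_fderiv one_ne_zero).clm_apply continuous_const)).add
    hAω

lemma continuous_magGradVec (hω : ContDiff ℝ 1 ω)
    (hA : ∀ j, ∀ x ∈ tsupport ω, ContinuousAt (A j) x) : Continuous (magGradVec N A ω) :=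
  (PiLp.continuous_toLp 2 _).comp (continuous_pi fun _ => continuous_magGrad hω (hA _))

lemma integral_norm_magGradVec_sq {μ : Measure (Fin N → ℝ)}
    (h : ∀ j, Integrable (fun x => ‖magGrad N A ω j x‖ ^ 2) μ) :
    ∫ x, ‖magGradVec N A ω x‖ ^ 2 ∂μ = ∑ j, ∫ x, ‖magGrad N A ω j x‖ ^ 2 ∂μ := by
  simp_rw [EuclideanSpace.norm_sq_eq]
  exact integral_finsetSum _ fun j _ => h j

end Magnetic

theorem exists_eLpNorm_le_mul_eLpNorm_magGradVec {N : ℕ} (hN : 2 ≤ N) {s : Set (Fin N → ℝ)}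
    (hs : IsBounded s) :
    ∃ C : ℝ≥0, ∀ (A : Fin N → (Fin N → ℝ) → ℝ) (ω : (Fin N → ℝ) → ℂ), ContDiff ℝ 1 ω →
      tsupport ω ⊆ s → eLpNorm ω 2 volume ≤ C * eLpNorm (magGradVec N A ω) 2 volume := by
  obtain ⟨C₁, hPoincare⟩ := exists_eLpNorm_two_le_mul_eLpNorm_fderiv (F := ℝ) volume
    (by simpa using hN) hs
  obtain ⟨C₂, hdiamagnetic⟩ := exists_norm_fderiv_smoothNorm_comp_le N
  refine ⟨C₁ * C₂.toNNReal, fun A ω hω hωs => ?_⟩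
  set ε : ℕ → ℝ := fun n => 1 / (n + 1)
  have hε : ∀ n, ε n ≠ 0 := fun n => by positivity
  set v : ℕ → (Fin N → ℝ) → ℝ := fun n => smoothNorm (ε n) ∘ ω
  have hv : ∀ n, ContDiff ℝ 1 (v n) := fun n =>
    ((contDiff_smoothNorm (hε n)).of_le le_top).comp hω
  have hv_le : ∀ n, eLpNorm (v n) 2 volume
      ≤ C₁ * C₂.toNNReal * eLpNorm (magGradVec N A ω) 2 volume := by
    intro n
    calc eLpNorm (v n) 2 volume ≤ C₁ * eLpNorm (fderiv ℝ (v n)) 2 volume :=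
          hPoincare _ (hv n) ((tsupport_comp_subset (smoothNorm_zero (by positivity)) ω).trans hωs)
      _ ≤ C₁ * (C₂.toNNReal * eLpNorm (magGradVec N A ω) 2 volume) := by
          gcongr
          exact eLpNorm_le_mul_eLpNorm_of_ae_le_mul (ae_of_all _ fun x =>
            hdiamagnetic (hε n) A (hω.differentiable one_ne_zero x)) 2
      _ = _ := by rw [mul_assoc]
  have hv_tendsto : ∀ x, Tendsto (fun n => v n x) atTop (𝓝 ‖ω x‖) := fun x =>
    (tendsto_smoothNorm (ω x)).comp tendsto_one_div_add_atTop_nhds_zero_nat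
  calc eLpNorm ω 2 volume = eLpNorm (fun x => ‖ω x‖) 2 volume := (eLpNorm_norm ω).symm
    _ ≤ atTop.liminf fun n => eLpNorm (v n) 2 volume :=
        Lp.eLpNorm_lim_le_liminf_eLpNorm (fun n => (hv n).continuous.aestronglyMeasurable) _
          (ae_of_all _ hv_tendsto)
    _ ≤ _ := liminf_le_of_frequently_le' (Frequently.of_forall hv_le)

theorem generalized_poincare_general (N : ℕ) (Ω : Set (Fin N → ℝ))
    (hΩb : Bornology.IsBounded Ω)
    (A : Fin N → (Fin N → ℝ) → ℝ)
    (hAdiff : ∀ j, ∀ x ∈ Ω, DifferentiableAt ℝ (A j) x)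
    (hcurl : ∃ x ∈ Ω, ∃ j k : Fin N,
      fderiv ℝ (A k) x (Pi.single j 1) ≠ fderiv ℝ (A j) x (Pi.single k 1)) :
    ∃ C > (0:ℝ), ∀ ω : (Fin N → ℝ) → ℂ,
      ContDiff ℝ 1 ω → HasCompactSupport ω → tsupport ω ⊆ Ω →
      Real.sqrt (∫ x in Ω, ‖ω x‖ ^ 2)
        ≤ C * Real.sqrt (∑ j, ∫ x in Ω, ‖magGrad N A ω j x‖ ^ 2) := by
  obtain ⟨_, -, j, k, hjk⟩ := hcurl
  have hN : 2 ≤ N := by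
    have : j ≠ k := by rintro rfl; exact hjk rfl
    have := Fin.val_ne_of_ne this
    omega
  obtain ⟨C, hC⟩ := exists_eLpNorm_le_mul_eLpNorm_magGradVec hN hΩb
  refine ⟨C + 1, by positivity, fun ω hω hωc hωΩ => ?_⟩
  have hA : ∀ j, ∀ x ∈ tsupport ω, ContinuousAt (A j) x := fun j x hx =>
    (hAdiff j x (hωΩ hx)).continuousAt
  have hωL2 : MemLp ω 2 volume := hω.continuous.memLp_of_hasCompactSupport hωc
  have hML2 : MemLp (magGradVec N A ω) 2 volume :=
    (continuous_magGradVec hω hA).memLp_of_hasCompactSupport (hωc.mono' support_magGradVec_subset)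
  have hint : ∀ j, Integrable (fun x => ‖magGrad N A ω j x‖ ^ 2) (volume.restrict Ω) := fun j =>
    ((continuous_magGrad hω (hA j)).memLp_of_hasCompactSupport
      (hωc.mono' (support_magGrad_subset j))).integrable_norm_pow two_ne_zero |>.restrict
  rw [← integral_norm_magGradVec_sq hint, ← MemLp.toReal_eLpNorm_two (hωL2.restrict Ω),
    ← MemLp.toReal_eLpNorm_two (hML2.restrict Ω),
    eLpNorm_restrict_eq_of_support_subset ((subset_tsupport ω).trans hωΩ),
    eLpNorm_restrict_eq_of_support_subset (support_magGradVec_subset.trans hωΩ)]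
  calc (eLpNorm ω 2 volume).toReal
      ≤ (C * eLpNorm (magGradVec N A ω) 2 volume).toReal :=
        ENNReal.toReal_mono (ENNReal.mul_ne_top ENNReal.coe_ne_top hML2.eLpNorm_ne_top)
          (hC A ω hω hωΩ)
    _ ≤ (C + 1) * (eLpNorm (magGradVec N A ω) 2 volume).toReal := by
        rw [ENNReal.toReal_mul, ENNReal.coe_toReal]
        gcongr
        linarith

/-- generalized Poincaré inequality: if `Ω` is bounded open and the
magnetic potential `A` has non-vanishing curl somewhere in `Ω`, then
`‖ω‖_{L²} ≤ C ‖(i∇+A)ω‖_{(L²)^N}` for all `ω ∈ H¹₀(Ω)` (here: smooth functions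
compactly supported in `Ω`). -/
theorem generalized_poincare (N : ℕ) (Ω : Set (Fin N → ℝ))
    (hΩo : IsOpen Ω) (hΩb : Bornology.IsBounded Ω)
    (A : Fin N → (Fin N → ℝ) → ℝ) (K : ℝ)
    (hAbd : ∀ j, ∀ x ∈ Ω, |A j x| ≤ K)
    (hAdiff : ∀ j, ∀ x ∈ Ω, DifferentiableAt ℝ (A j) x)
    (hcurl : ∃ x ∈ Ω, ∃ j k : Fin N,
      fderiv ℝ (A k) x (Pi.single j 1) ≠ fderiv ℝ (A j) x (Pi.single k 1)) :
    ∃ C > (0:ℝ), ∀ ω : (Fin N → ℝ) → ℂ,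
      ContDiff ℝ 1 ω → HasCompactSupport ω → tsupport ω ⊆ Ω →
      Real.sqrt (∫ x in Ω, ‖ω x‖ ^ 2)
        ≤ C * Real.sqrt (∑ j, ∫ x in Ω, ‖magGrad N A ω j x‖ ^ 2) :=
  generalized_poincare_general N Ω hΩb A hAdiff hcurl
end

section
/- Let Ω ⊂ ℝ intervals or ℝ^N with Ω connected, A ∈ (C¹(Ω))^N with curl A ≡ 0 (i.e. ∂_{x_j}a_k = ∂_{x_k}a_j for all j,k). If ω ∈ C¹(Ω) satisfies i∂_{x_j}ω + a_j ω = 0 for all j = 1,...,N, then |ω| is constant on Ω; in particular if ω vanishes somewhere (e.g. ω ∈ H¹_0) then ω ≡ 0. -/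
/-!
Since `a_j` is real, the equation `i ∂_j ω = -a_j ω` makes every partial derivative of `ω`
a real multiple of `i ω`, hence orthogonal to `ω` in `ℂ ≅ ℝ²`. Therefore
`d ‖ω‖² = 2 ⟪ω, dω⟫ = 0` on `Ω`, and `‖ω‖²` is constant on the connected open set `Ω`.
-/

open Complex
open scoped InnerProductSpace

theorem Complex.real_inner_self_I_mul (z : ℂ) : ⟪z, I * z⟫_ℝ = 0 := by
  simp [Complex.inner, mul_comm]

theorem HasFDerivAt.norm_sq_of_inner_eq_zero {E F : Type*} [NormedAddCommGroup E]
    [NormedSpace ℝ E] [NormedAddCommGroup F] [InnerProductSpace ℝ F] {f : E → F}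
    {f' : E →L[ℝ] F} {x : E} (hf : HasFDerivAt f f' x) (h : ∀ v, ⟪f x, f' v⟫_ℝ = 0) :
    HasFDerivAt (‖f ·‖ ^ 2) (0 : E →L[ℝ] ℝ) x := by
  convert hf.norm_sq using 1
  ext v
  simp [h v]

theorem real_inner_apply_eq_zero_of_I_mul_apply_add_eq_zero {ι : Type*} [Fintype ι]
    [DecidableEq ι] (L : (ι → ℝ) →L[ℝ] ℂ) (a : ι → ℝ) (z : ℂ)
    (h : ∀ j, I * L (Pi.single j 1) + a j * z = 0) (v : ι → ℝ) : ⟪z, L v⟫_ℝ = 0 := by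
  have hpartial : ∀ j, L (Pi.single j 1) = a j • (I * z) := fun j => by
    rw [Complex.real_smul]
    linear_combination (-I) * h j + L (Pi.single j 1) * I_sq
  rw [pi_eq_sum_univ' v, map_sum]
  simp only [map_smul, hpartial, inner_sum, real_inner_smul_right, real_inner_self_I_mul,
    mul_zero, Finset.sum_const_zero]

theorem magnetic_kernel_curl_zero_general (N : ℕ) (Ω : Set (Fin N → ℝ))
    (hΩo : IsOpen Ω) (hΩc : IsConnected Ω)
    (A : Fin N → (Fin N → ℝ) → ℝ)
    (ω : (Fin N → ℝ) → ℂ)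
    (hω : ∀ x ∈ Ω, DifferentiableAt ℝ ω x)
    (heq : ∀ x ∈ Ω, ∀ j : Fin N,
      Complex.I * fderiv ℝ ω x (Pi.single j 1) + (A j x : ℂ) * ω x = 0) :
    (∀ x ∈ Ω, ∀ y ∈ Ω, ‖ω x‖ = ‖ω y‖) ∧
    ((∃ x ∈ Ω, ω x = 0) → ∀ x ∈ Ω, ω x = 0) := by
  have hderiv : ∀ x ∈ Ω, HasFDerivAt (‖ω ·‖ ^ 2) (0 : (Fin N → ℝ) →L[ℝ] ℝ) x := fun x hx =>
    HasFDerivAt.norm_sq_of_inner_eq_zero (hω x hx).hasFDerivAt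
      (real_inner_apply_eq_zero_of_I_mul_apply_add_eq_zero _ (A · x) _ (heq x hx))
  have hsq : ∀ x ∈ Ω, ∀ y ∈ Ω, ‖ω x‖ ^ 2 = ‖ω y‖ ^ 2 := fun x hx y hy =>
    hΩo.is_const_of_fderiv_eq_zero hΩc.isPreconnected
      (fun z hz => (hderiv z hz).differentiableAt.differentiableWithinAt)
      (fun z hz => (hderiv z hz).fderiv) hx hy
  have hnorm : ∀ x ∈ Ω, ∀ y ∈ Ω, ‖ω x‖ = ‖ω y‖ := fun x hx y hy =>
    (pow_left_inj₀ (norm_nonneg _) (norm_nonneg _) two_ne_zero).1 (hsq x hx y hy)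
  refine ⟨hnorm, ?_⟩
  rintro ⟨x₀, hx₀, hzero⟩ x hx
  simpa [hzero] using hnorm x hx x₀ hx₀

/-- on a connected open `Ω ⊆ ℝ^N`, if `A ∈ C¹` has vanishing curl and
`ω ∈ C¹(Ω)` satisfies the system `i ∂_j ω + a_j ω = 0` for all `j`, then `|ω|` is
constant on `Ω`; in particular if `ω` vanishes somewhere on `Ω` then `ω ≡ 0` on `Ω`. -/
theorem magnetic_kernel_curl_zero (N : ℕ) (Ω : Set (Fin N → ℝ))
    (hΩo : IsOpen Ω) (hΩc : IsConnected Ω)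
    (A : Fin N → (Fin N → ℝ) → ℝ)
    (hA : ∀ j, ∀ x ∈ Ω, DifferentiableAt ℝ (A j) x)
    (hAc : ∀ j, ContinuousOn (fun x => fderiv ℝ (A j) x) Ω)
    (hcurl : ∀ x ∈ Ω, ∀ j k : Fin N,
      fderiv ℝ (A k) x (Pi.single j 1) = fderiv ℝ (A j) x (Pi.single k 1))
    (ω : (Fin N → ℝ) → ℂ)
    (hω : ∀ x ∈ Ω, DifferentiableAt ℝ ω x)
    (hωc : ContinuousOn (fun x => fderiv ℝ ω x) Ω)
    (heq : ∀ x ∈ Ω, ∀ j : Fin N,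
      Complex.I * fderiv ℝ ω x (Pi.single j 1) + (A j x : ℂ) * ω x = 0) :
    (∀ x ∈ Ω, ∀ y ∈ Ω, ‖ω x‖ = ‖ω y‖) ∧
    ((∃ x ∈ Ω, ω x = 0) → ∀ x ∈ Ω, ω x = 0) :=
  magnetic_kernel_curl_zero_general N Ω hΩo hΩc A ω hω heq
end

section
/- Let b ∈ C²(0,T] satisfy C₁ ≤ b ≤ C₂ and |b^{(k)}(t)| ≤ C₃(ν(t)/t)^k for k = 1,2. For λ ≥ M, the solution of D_t²û − λ²b²(t)û = 0 written as the first-order system D_t V = B(t,λ)V with V = (λû, D_tû)ᵀ and B = [[0, λ],[λ b², 0]] satisfies, for 0 ≤ t ≤ t_λ (pseudodifferential zone, t λ ≤ 2^P ν(t)): |V(t,λ)| ≲ exp(c₁ ν(t_λ)) (λ|û(0,λ)| + |D_tû(0,λ)|), where t_λ solves tλ = 2^P ν(t) and c₁ depends only on P, M, C₂. -/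
/-!
The micro-energy `V = (λ û, D_t û)` satisfies `V' = B(t, λ) V` with `‖B(t, λ)‖ ≤ c λ`,
`c = max 1 C₂²`, so Gronwall gives `‖V(t)‖ ≤ exp(c λ t) ‖V(0)‖`. In the pseudodifferential zone
`λ t ≤ λ t_λ = 2^P ν(t_λ)`, which turns this into the bound `exp(2^P c ν(t_λ))`.
-/

open Set

-- Gronwall with the bound only in the interior: `b` is not controlled at `t = 0`.
theorem norm_le_norm_mul_exp_of_norm_deriv_le_on_Ioo {E : Type*} [NormedAddCommGroup E]
    [NormedSpace ℝ E] {f f' : ℝ → E} {K a b : ℝ} (hab : a ≤ b) (hf : ContinuousOn f (Icc a b))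
    (hf' : ∀ x ∈ Ioo a b, HasDerivWithinAt f (f' x) (Ici x) x)
    (bound : ∀ x ∈ Ioo a b, ‖f' x‖ ≤ K * ‖f x‖) :
    ‖f b‖ ≤ ‖f a‖ * Real.exp (K * (b - a)) := by
  rcases hab.eq_or_lt with rfl | hab
  · simp
  have from_interior : ∀ s ∈ Ioc a b, ‖f b‖ ≤ ‖f s‖ * Real.exp (K * (b - s)) := by
    intro s hs
    have hsub : Icc s b ⊆ Icc a b := Icc_subset_Icc_left hs.1.le
    have hIco : Ico s b ⊆ Ioo a b := fun x hx => ⟨hs.1.trans_le hx.1, hx.2⟩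
    simpa only [gronwallBound_ε0] using norm_le_gronwallBound_of_norm_deriv_right_le (ε := 0)
      (hf.mono hsub) (fun x hx => hf' x (hIco hx)) le_rfl
      (fun x hx => (bound x (hIco hx)).trans_eq (add_zero _).symm) b ⟨hs.2, le_rfl⟩
  have hclosure : closure (Ioc a b) = Icc a b := closure_Ioc hab.ne
  refine le_on_closure from_interior continuousOn_const ?_ (hclosure ▸ left_mem_Icc.2 hab.le)
  rw [hclosure]
  exact (continuous_norm.comp_continuousOn hf).mul
    (Real.continuous_exp.comp_continuousOn (by fun_prop))

-- The paper's `V = (λ û, D_t û)`; `ℂ × ℂ` carries the sup norm, whence `K = 2`.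
noncomputable def microEnergy (lam : ℝ) (u du : ℝ → ℂ) (τ : ℝ) : ℂ × ℂ :=
  ((lam : ℂ) * u τ, du τ)

section microEnergy

variable {lam : ℝ} {u du : ℝ → ℂ}

theorem mul_norm_le_norm_microEnergy (hlam : 0 ≤ lam) (τ : ℝ) :
    lam * ‖u τ‖ ≤ ‖microEnergy lam u du τ‖ := by
  calc lam * ‖u τ‖ = ‖(microEnergy lam u du τ).1‖ := by
        rw [microEnergy, norm_mul, Complex.norm_real, Real.norm_of_nonneg hlam]
    _ ≤ ‖microEnergy lam u du τ‖ := norm_fst_le _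

theorem norm_microEnergy_le_add (hlam : 0 ≤ lam) (τ : ℝ) :
    ‖microEnergy lam u du τ‖ ≤ lam * ‖u τ‖ + ‖du τ‖ := by
  have hnorm : ‖(lam : ℂ) * u τ‖ = lam * ‖u τ‖ := by
    rw [norm_mul, Complex.norm_real, Real.norm_of_nonneg hlam]
  rw [microEnergy, Prod.norm_def, hnorm]
  exact max_le (le_add_of_nonneg_right (norm_nonneg _))
    (le_add_of_nonneg_left (by positivity))

theorem add_le_two_mul_norm_microEnergy (hlam : 0 ≤ lam) (τ : ℝ) :
    lam * ‖u τ‖ + ‖du τ‖ ≤ 2 * ‖microEnergy lam u du τ‖ := by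
  have hfst := mul_norm_le_norm_microEnergy (u := u) (du := du) hlam τ
  have hsnd : ‖du τ‖ ≤ ‖microEnergy lam u du τ‖ := norm_snd_le (microEnergy lam u du τ)
  linarith

theorem norm_microEnergy_deriv_le (hlam : 0 ≤ lam) {β c : ℝ} (hc : 1 ≤ c) (hβ : β ^ 2 ≤ c)
    (τ : ℝ) :
    ‖((lam : ℂ) * du τ, ((-(lam ^ 2 * β ^ 2) : ℝ) : ℂ) * u τ)‖
      ≤ c * lam * ‖microEnergy lam u du τ‖ := by
  have hfst := mul_norm_le_norm_microEnergy (u := u) (du := du) hlam τ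
  have hsnd : ‖du τ‖ ≤ ‖microEnergy lam u du τ‖ := norm_snd_le (microEnergy lam u du τ)
  rw [Prod.norm_def]
  refine max_le ?_ ?_
  · rw [norm_mul, Complex.norm_real, Real.norm_of_nonneg hlam]
    calc lam * ‖du τ‖ ≤ 1 * lam * ‖microEnergy lam u du τ‖ := by nlinarith
      _ ≤ c * lam * ‖microEnergy lam u du τ‖ := by gcongr
  · rw [norm_mul, Complex.norm_real, Real.norm_eq_abs, abs_neg,
      abs_of_nonneg (by positivity : 0 ≤ lam ^ 2 * β ^ 2)]
    calc lam ^ 2 * β ^ 2 * ‖u τ‖ = β ^ 2 * lam * (lam * ‖u τ‖) := by ring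
      _ ≤ c * lam * ‖microEnergy lam u du τ‖ := by gcongr

theorem norm_microEnergy_le_mul_exp {β : ℝ → ℝ} {a t c : ℝ} (hlam : 0 ≤ lam) (hat : a ≤ t)
    (hu : ∀ τ ∈ Icc a t, HasDerivAt u (du τ) τ)
    (hdu : ∀ τ ∈ Icc a t, HasDerivAt du ((-(lam ^ 2 * (β τ) ^ 2) : ℝ) * u τ) τ)
    (hc : 1 ≤ c) (hβ : ∀ τ ∈ Ioo a t, β τ ^ 2 ≤ c) :
    ‖microEnergy lam u du t‖ ≤ ‖microEnergy lam u du a‖ * Real.exp (c * lam * (t - a)) := by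
  have hderiv : ∀ τ ∈ Icc a t, HasDerivAt (microEnergy lam u du)
      ((lam : ℂ) * du τ, ((-(lam ^ 2 * (β τ) ^ 2) : ℝ) : ℂ) * u τ) τ :=
    fun τ hτ => ((hu τ hτ).const_mul (lam : ℂ)).prodMk (hdu τ hτ)
  exact norm_le_norm_mul_exp_of_norm_deriv_le_on_Ioo hat
    (fun τ hτ => (hderiv τ hτ).continuousAt.continuousWithinAt)
    (fun τ hτ => (hderiv τ (Ioo_subset_Icc_self hτ)).hasDerivWithinAt)
    (fun τ hτ => norm_microEnergy_deriv_le hlam hc (hβ τ hτ) τ)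

end microEnergy

theorem pseudodifferential_zone_energy_estimate_general
    (T C₁ C₂ M : ℝ) (P : ℕ) (ν b : ℝ → ℝ)
    (hC₁ : 0 < C₁) (hM : 0 < M)
    (hb : ∀ t ∈ Set.Ioc (0:ℝ) T, C₁ ≤ b t ∧ b t ≤ C₂) :
    ∃ c₁ > (0:ℝ), ∃ K > (0:ℝ), ∀ lam : ℝ, M ≤ lam →
      ∀ tl ∈ Set.Ioc (0:ℝ) T, tl * lam = 2 ^ P * ν tl →
      ∀ u du : ℝ → ℂ,
        (∀ τ ∈ Set.Icc (0:ℝ) T, HasDerivAt u (du τ) τ) →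
        (∀ τ ∈ Set.Icc (0:ℝ) T,
          HasDerivAt du ((-(lam ^ 2 * (b τ) ^ 2) : ℝ) * u τ) τ) →
        ∀ t ∈ Set.Icc (0:ℝ) tl,
          lam * ‖u t‖ + ‖du t‖ ≤ K * Real.exp (c₁ * ν tl) * (lam * ‖u 0‖ + ‖du 0‖) := by
  set c := max 1 (C₂ ^ 2)
  refine ⟨2 ^ P * c, by positivity, 2, two_pos, ?_⟩
  intro lam hlam tl htl hrel u du hu hdu t ht
  have hlam0 : 0 ≤ lam := hM.le.trans hlam
  have hsub : Icc 0 t ⊆ Icc 0 T := Icc_subset_Icc_right (ht.2.trans htl.2)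
  have hb_sq : ∀ τ ∈ Ioo 0 t, b τ ^ 2 ≤ c := fun τ hτ => by
    obtain ⟨hlow, hup⟩ := hb τ ⟨hτ.1, (hsub (Ioo_subset_Icc_self hτ)).2⟩
    exact (pow_le_pow_left₀ (hC₁.le.trans hlow) hup 2).trans (le_max_right _ _)
  have hgronwall := norm_microEnergy_le_mul_exp hlam0 ht.1 (fun τ hτ => hu τ (hsub hτ))
    (fun τ hτ => hdu τ (hsub hτ)) (le_max_left _ _) hb_sq
  have hzone : c * lam * (t - 0) ≤ 2 ^ P * c * ν tl := by
    have : lam * t ≤ lam * tl := mul_le_mul_of_nonneg_left ht.2 hlam0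
    nlinarith [le_max_left 1 (C₂ ^ 2)]
  calc lam * ‖u t‖ + ‖du t‖ ≤ 2 * ‖microEnergy lam u du t‖ :=
        add_le_two_mul_norm_microEnergy hlam0 t
    _ ≤ 2 * (Real.exp (2 ^ P * c * ν tl) * (lam * ‖u 0‖ + ‖du 0‖)) := by
        rw [mul_comm (Real.exp _)]
        gcongr
        exact hgronwall.trans (by gcongr; exact norm_microEnergy_le_add hlam0 0)
    _ = 2 * Real.exp (2 ^ P * c * ν tl) * (lam * ‖u 0‖ + ‖du 0‖) := by ring

/-- energy estimate in the pseudodifferential zone `Z_pd(P,M)`.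
For `λ ≥ M` and `0 ≤ t ≤ t_λ` (where `t_λ λ = 2^P ν(t_λ)`), the micro-energy
`V = (λ û, D_t û)` of a solution of `D_t²û - λ² b²(t) û = 0` satisfies
`|V(t,λ)| ≤ K exp(c₁ ν(t_λ)) (λ|û(0)| + |D_tû(0)|)`, with `c₁, K` depending only on
the fixed constants. -/
theorem pseudodifferential_zone_energy_estimate
    (T C₁ C₂ C₃ C₄ M : ℝ) (P : ℕ) (ν b : ℝ → ℝ)
    (hT : 0 < T) (hC₁ : 0 < C₁) (hC₄ : 0 < C₄) (hM : 0 < M)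
    (hνlb : ∀ t ∈ Set.Ioc (0:ℝ) T, C₄ ≤ ν t)
    (hνanti : StrictAntiOn ν (Set.Ioc (0:ℝ) T))
    (hνcont : ContinuousOn ν (Set.Ioc (0:ℝ) T))
    (hb : ∀ t ∈ Set.Ioc (0:ℝ) T, C₁ ≤ b t ∧ b t ≤ C₂)
    (hb1 : ∀ t ∈ Set.Ioc (0:ℝ) T, |deriv b t| ≤ C₃ * (ν t / t))
    (hb2 : ∀ t ∈ Set.Ioc (0:ℝ) T, |deriv (deriv b) t| ≤ C₃ * (ν t / t) ^ 2) :
    ∃ c₁ > (0:ℝ), ∃ K > (0:ℝ), ∀ lam : ℝ, M ≤ lam →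
      ∀ tl ∈ Set.Ioc (0:ℝ) T, tl * lam = 2 ^ P * ν tl →
      ∀ u du : ℝ → ℂ,
        (∀ τ ∈ Set.Icc (0:ℝ) T, HasDerivAt u (du τ) τ) →
        (∀ τ ∈ Set.Icc (0:ℝ) T,
          HasDerivAt du ((-(lam ^ 2 * (b τ) ^ 2) : ℝ) * u τ) τ) →
        ∀ t ∈ Set.Icc (0:ℝ) tl,
          lam * ‖u t‖ + ‖du t‖ ≤ K * Real.exp (c₁ * ν tl) * (lam * ‖u 0‖ + ‖du 0‖) :=
  pseudodifferential_zone_energy_estimate_general T C₁ C₂ M P ν b hC₁ hM hb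
end
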